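/- arXiv:math/0211467 — 8 statements merged into one kernel-verified Lean document; each statement's English description precedes it below -/
import Mathlib

section
/- Let p > 2 be a prime, ζ a primitive p-th root of unity, and π = (1-ζ) the prime ideal of ℤ[ζ] above p. If α, β ∈ ℤ[ζ] satisfy α ≢ 0 mod π and α ≡ β mod π, then α^p ≡ β^p mod π^(p+1). -/
/-!
Write `λ = ζ - 1`. Since the residue field `𝓞 K ⧸ (λ)` is `𝔽_p` and `β` is a unit modulo `λ`,
one can pick `a ∈ ℕ` with `(α - β) / λ ≡ a β (mod λ)`; as `ζ ^ a ≡ 1 + a λ (mod λ²)`, this gives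
`α ≡ ζ ^ a β (mod λ²)`. Finally `x ≡ y (mod λ²)` implies `x ^ p ≡ y ^ p (mod λ^(p+1))`, because the
binomial expansion of `(y + λ² s) ^ p` has middle terms divisible by `p λ²` and `λ^(p-1) ∣ p`;
and `(ζ ^ a β) ^ p = β ^ p`.
-/

open NumberField

theorem natCast_surjective_of_card_eq_prime {F : Type*} [Ring F] {p : ℕ} (hp : p.Prime)
    (hF : Nat.card F = p) : Function.Surjective (Nat.cast : ℕ → F) := by
  have : NeZero p := ⟨hp.ne_zero⟩
  have : Finite F := Nat.finite_of_card_ne_zero (hF ▸ hp.ne_zero)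
  have := Fintype.ofFinite F
  let e := ZMod.ringEquivOfPrime F hp (Nat.card_eq_fintype_card (α := F) ▸ hF)
  intro y
  obtain ⟨n, hn⟩ := ZMod.natCast_zmod_surjective (e.symm y)
  exact ⟨n, by rw [← map_natCast e, hn, e.apply_symm_apply]⟩

section CommRing

variable {R : Type*} [CommRing R]

theorem pow_succ_dvd_pow_sub_pow_of_sq_dvd_sub {p : ℕ} (hp : p.Prime) {c x y : R}
    (hc : c ^ (p - 1) ∣ (p : R)) (hxy : c ^ 2 ∣ x - y) : c ^ (p + 1) ∣ x ^ p - y ^ p := by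
  obtain ⟨s, hs⟩ := hxy
  obtain ⟨r, hr⟩ := exists_add_pow_prime_eq hp y (c ^ 2 * s)
  have hsplit : x ^ p - y ^ p = c ^ (2 * p) * s ^ p + p * c ^ 2 * (y * s * r) := by
    rw [show x = y + c ^ 2 * s by rw [← hs]; ring, hr, pow_mul]
    ring
  rw [hsplit]
  have := hp.one_le
  refine dvd_add (dvd_mul_of_dvd_left (pow_dvd_pow c (show p + 1 ≤ 2 * p by omega)) _)
    (dvd_mul_of_dvd_left ?_ _)
  rw [show p + 1 = p - 1 + 2 by omega, pow_add]
  exact mul_dvd_mul_right hc _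

theorem exists_sq_dvd_sub_pow_mul {ζ α β : R} [(Ideal.span {ζ - 1}).IsMaximal]
    (hsurj : Function.Surjective (Nat.cast : ℕ → R ⧸ Ideal.span {ζ - 1}))
    (hα : ¬ ζ - 1 ∣ α) (hαβ : ζ - 1 ∣ α - β) : ∃ a : ℕ, (ζ - 1) ^ 2 ∣ α - ζ ^ a * β := by
  let _ : Field (R ⧸ Ideal.span {ζ - 1}) := Ideal.Quotient.field _
  obtain ⟨γ, hγ⟩ := hαβ
  have hβ : Ideal.Quotient.mk (Ideal.span {ζ - 1}) β ≠ 0 := by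
    rwa [Ne, Ideal.Quotient.eq_zero_iff_mem, Ideal.mem_span_singleton,
      show β = α - (ζ - 1) * γ by rw [← hγ]; ring, dvd_sub_left (dvd_mul_right _ _)]
  obtain ⟨a, ha⟩ :=
    hsurj (Ideal.Quotient.mk (Ideal.span {ζ - 1}) γ / Ideal.Quotient.mk (Ideal.span {ζ - 1}) β)
  obtain ⟨δ, hδ⟩ : ζ - 1 ∣ γ - a * β := by
    rw [← Ideal.mem_span_singleton, ← Ideal.Quotient.eq_zero_iff_mem, map_sub, map_mul,
      map_natCast, ha, div_mul_cancel₀ _ hβ, sub_self]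
  -- `ζ ^ a ≡ 1 + a (ζ - 1) (mod (ζ - 1)²)`
  obtain ⟨ε, hε⟩ := sq_dvd_add_pow_sub_sub (ζ - 1) 1 a
  rw [add_sub_cancel, one_pow, one_pow, one_mul] at hε
  exact ⟨a, δ - ε * β, by linear_combination hγ + (ζ - 1) * hδ - β * hε⟩

theorem sub_one_pow_succ_dvd_pow_sub_pow {p : ℕ} (hp : p.Prime) {ζ α β : R} (hζ : ζ ^ p = 1)
    [(Ideal.span {ζ - 1}).IsMaximal] (hcard : Nat.card (R ⧸ Ideal.span {ζ - 1}) = p)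
    (hdvd : (ζ - 1) ^ (p - 1) ∣ (p : R)) (hα : ¬ ζ - 1 ∣ α) (hαβ : ζ - 1 ∣ α - β) :
    (ζ - 1) ^ (p + 1) ∣ α ^ p - β ^ p := by
  obtain ⟨a, ha⟩ :=
    exists_sq_dvd_sub_pow_mul (natCast_surjective_of_card_eq_prime hp hcard) hα hαβ
  have := pow_succ_dvd_pow_sub_pow_of_sq_dvd_sub hp hdvd ha
  rwa [mul_pow, ← pow_mul, mul_comm a, pow_mul, hζ, one_pow, one_mul] at this

end CommRing

theorem stmt0_general (p : ℕ+) (hp : (p : ℕ).Prime)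
    {K : Type*} [Field K] [NumberField K] [IsCyclotomicExtension {(p : ℕ)} ℚ K]
    (ζ : 𝓞 K) (hζ : IsPrimitiveRoot ζ (p : ℕ))
    (α β : 𝓞 K)
    (hα : α ∉ Ideal.span {1 - ζ})
    (hαβ : α - β ∈ Ideal.span {1 - ζ}) :
    α ^ (p : ℕ) - β ^ (p : ℕ) ∈ (Ideal.span {1 - ζ}) ^ ((p : ℕ) + 1) := by
  have : Fact (p : ℕ).Prime := ⟨hp⟩
  have hζK : IsPrimitiveRoot (ζ : K) p := hζ.map_of_injective RingOfIntegers.coe_injective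
  have hζK' : IsPrimitiveRoot (ζ : K) ((p : ℕ) ^ (0 + 1)) := by simpa using hζK
  have : IsCyclotomicExtension {(p : ℕ) ^ (0 + 1)} ℚ K := by simpa
  have : (Ideal.span {ζ - 1}).IsMaximal :=
    (IsCyclotomicExtension.Rat.isPrime_span_zeta_sub_one p 0 hζK').isMaximal
      (IsCyclotomicExtension.Rat.span_zeta_sub_one_ne_bot p 0 hζK')
  have hcard : Nat.card (𝓞 K ⧸ Ideal.span {ζ - 1}) = p := by
    rw [← Submodule.cardQuot_apply, ← Ideal.absNorm_apply]
    exact IsCyclotomicExtension.Rat.absNorm_span_zeta_sub_one p 0 hζK'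
  have hdvd : (ζ - 1) ^ ((p : ℕ) - 1) ∣ ((p : ℕ) : 𝓞 K) :=
    (IsCyclotomicExtension.Rat.associated_zeta_sub_one_pow_prime p hζK).dvd
  have hspan : Ideal.span {1 - ζ} = Ideal.span {ζ - 1} := by
    rw [← neg_sub ζ 1, Ideal.span_singleton_neg]
  rw [hspan, Ideal.mem_span_singleton] at hα hαβ
  rw [hspan, Ideal.span_singleton_pow, Ideal.mem_span_singleton]
  exact sub_one_pow_succ_dvd_pow_sub_pow hp hζ.pow_eq_one hcard hdvd hα hαβ

theorem stmt0 (p : ℕ+) (hp : (p : ℕ).Prime) (hp2 : 2 < (p : ℕ))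
    {K : Type*} [Field K] [NumberField K] [IsCyclotomicExtension {(p : ℕ)} ℚ K]
    (ζ : 𝓞 K) (hζ : IsPrimitiveRoot ζ (p : ℕ))
    (α β : 𝓞 K)
    (hα : α ∉ Ideal.span {1 - ζ})
    (hαβ : α - β ∈ Ideal.span {1 - ζ}) :
    α ^ (p : ℕ) - β ^ (p : ℕ) ∈ (Ideal.span {1 - ζ}) ^ ((p : ℕ) + 1) :=
  stmt0_general p hp ζ hζ α β hα hαβ
end

section
/- Let p > 2 be a prime, ζ a primitive p-th root of unity, and π = (1-ζ)ℤ[ζ]. For every α ∈ ℤ[ζ] with α ≢ 0 mod π, there exists b ∈ ℤ such that α^p ≡ b^p mod π^(p+1). -/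
/-!
Write `λ = ζ - 1`; the ideals `(1 - ζ)` and `(λ)` coincide. Since `𝓞 K = ℤ[ζ]` and `ζ ≡ 1 mod λ`,
every element is congruent to a rational integer mod `λ`; take `a ∈ ℤ` with `α ≡ a`, so `p ∤ a`.
Then `α ≡ a + λc mod λ²` for some `c ∈ ℤ`, and as `ζᵏ ≡ 1 + kλ mod λ²` and `λ ∣ p`, choosing
`k a ≡ c mod p` gives `α ≡ ζᵏ a mod λ²`. In `α^p - a^p = ∏_{η^p = 1} (α - η a)` every factor is
`≡ α - a ≡ 0 mod λ` and the factor `η = ζᵏ` is `0 mod λ²`, so `λ^(p+1)` divides the product.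
-/

open NumberField Polynomial Finset

theorem Int.exists_natCast_dvd_sub_mul {p : ℕ} (hp : p.Prime) {a : ℤ} (ha : ¬ (p : ℤ) ∣ a)
    (c : ℤ) : ∃ k : ℕ, (p : ℤ) ∣ c - a * k := by
  have := Fact.mk hp
  have ha' : (a : ZMod p) ≠ 0 := by rwa [ne_eq, ZMod.intCast_zmod_eq_zero_iff_dvd]
  refine ⟨(c * (a : ZMod p)⁻¹).val, (ZMod.intCast_zmod_eq_zero_iff_dvd _ _).mp ?_⟩
  push_cast
  rw [ZMod.natCast_val, ZMod.cast_id, mul_left_comm, mul_inv_cancel₀ ha', mul_one, sub_self]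

section CommRing

variable {R : Type*} [CommRing R] {ζ : R}

theorem exists_sub_one_dvd_sub_intCast_of_adjoin_eq_top (h : Algebra.adjoin ℤ {ζ} = ⊤) (x : R) :
    ∃ c : ℤ, ζ - 1 ∣ x - c := by
  have hx : x ∈ (aeval (R := ℤ) ζ).range := by
    rw [← Algebra.adjoin_singleton_eq_range_aeval ℤ, h]; trivial
  obtain ⟨f, rfl⟩ := hx
  refine ⟨f.eval 1, ?_⟩
  have := sub_dvd_eval_sub ζ 1 (f.map (Int.castRingHom R))
  rwa [eval_map, eval_map, eval₂_at_one, ← algebraMap_int_eq, ← aeval_def] at this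

theorem exists_sub_one_sq_dvd_sub_pow_mul {p : ℕ} (hp : p.Prime) (hζp : ζ - 1 ∣ (p : R))
    (hres : ∀ x : R, ∃ c : ℤ, ζ - 1 ∣ x - c) {x : R} {a : ℤ} (ha : ¬ (p : ℤ) ∣ a)
    (hxa : ζ - 1 ∣ x - a) : ∃ k : ℕ, (ζ - 1) ^ 2 ∣ x - ζ ^ k * a := by
  obtain ⟨s, hs⟩ := hxa
  obtain ⟨c, hc⟩ := hres s
  obtain ⟨k, m, hm⟩ := Int.exists_natCast_dvd_sub_mul hp ha c
  have hpow : (ζ - 1) ^ 2 ∣ ζ ^ k - 1 - (ζ - 1) * k := by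
    simpa [sub_right_comm] using sq_dvd_add_pow_sub_sub (ζ - 1) 1 k
  have hlin : (ζ - 1) ^ 2 ∣ (ζ - 1) * (c - a * k : ℤ) := by
    rw [hm, sq]; push_cast
    exact mul_dvd_mul_left _ (hζp.mul_right _)
  refine ⟨k, ?_⟩
  have : x - ζ ^ k * a = (ζ - 1) * (s - c) + (ζ - 1) * (c - a * k : ℤ)
      - a * (ζ ^ k - 1 - (ζ - 1) * k) := by
    push_cast; linear_combination hs
  rw [this]
  refine dvd_sub (dvd_add ?_ hlin) (hpow.mul_left _)
  rw [sq]
  exact mul_dvd_mul_left _ hc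

theorem IsPrimitiveRoot.sub_one_pow_succ_dvd_pow_sub_pow [IsDomain R] {n : ℕ} [NeZero n]
    (hζ : IsPrimitiveRoot ζ n) {x y : R} (hxy : ζ - 1 ∣ x - y) {k : ℕ}
    (hk : (ζ - 1) ^ 2 ∣ x - ζ ^ k * y) : (ζ - 1) ^ (n + 1) ∣ x ^ n - y ^ n := by
  classical
  have hn := NeZero.pos n
  have hmem : ζ ^ k ∈ nthRootsFinset n (1 : R) := by
    rw [Polynomial.mem_nthRootsFinset hn, ← pow_mul, mul_comm, pow_mul, hζ.pow_eq_one, one_pow]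
  have hfactor : ∀ η ∈ nthRootsFinset n (1 : R), ζ - 1 ∣ x - η * y := by
    intro η hη
    obtain ⟨j, -, rfl⟩ := hζ.eq_pow_of_pow_eq_one ((Polynomial.mem_nthRootsFinset hn _).mp hη)
    have hj : ζ - 1 ∣ ζ ^ j - 1 := by simpa using sub_dvd_pow_sub_pow ζ 1 j
    rw [show x - ζ ^ j * y = (x - y) - (ζ ^ j - 1) * y by ring]
    exact dvd_sub hxy (hj.mul_right y)
  have hrest : (ζ - 1) ^ (n - 1) ∣ ∏ η ∈ nthRootsFinset n (1 : R) \ {ζ ^ k}, (x - η * y) := by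
    have hcard : (nthRootsFinset n (1 : R) \ {ζ ^ k}).card = n - 1 := by
      rw [card_sdiff_of_subset (singleton_subset_iff.mpr hmem), hζ.card_nthRootsFinset,
        card_singleton]
    rw [← hcard, ← prod_const]
    exact prod_dvd_prod_of_dvd _ _ fun η hη ↦ hfactor η (mem_sdiff.mp hη).1
  rw [hζ.pow_sub_pow_eq_prod_sub_mul x y hn, prod_eq_prod_sdiff_singleton_mul hmem,
    show n + 1 = n - 1 + 2 by omega, pow_add]
  exact mul_dvd_mul hrest hk

end CommRing

theorem stmt1_general (p : ℕ+) (hp : (p : ℕ).Prime)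
    {K : Type*} [Field K] [NumberField K] [IsCyclotomicExtension {(p : ℕ)} ℚ K]
    (ζ : 𝓞 K) (hζ : IsPrimitiveRoot ζ (p : ℕ))
    (α : 𝓞 K) (hα : α ∉ Ideal.span {1 - ζ}) :
    ∃ b : ℤ, α ^ (p : ℕ) - (b : 𝓞 K) ^ (p : ℕ) ∈ (Ideal.span {1 - ζ}) ^ ((p : ℕ) + 1) := by
  have := Fact.mk hp
  have hζK : IsPrimitiveRoot (ζ : K) p := hζ.map_of_injective RingOfIntegers.coe_injective
  have hres : ∀ x : 𝓞 K, ∃ c : ℤ, ζ - 1 ∣ x - c :=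
    exists_sub_one_dvd_sub_intCast_of_adjoin_eq_top
      (IsCyclotomicExtension.Rat.adjoin_singleton_eq_top hζK)
  have hζp : ζ - 1 ∣ ((p : ℕ) : 𝓞 K) := hζK.toInteger_sub_one_dvd_prime'
  have hspan : Ideal.span {1 - ζ} = Ideal.span {ζ - 1} := by
    rw [← neg_sub, Ideal.span_singleton_neg]
  rw [hspan, Ideal.mem_span_singleton] at hα
  obtain ⟨a, ha⟩ := hres α
  have hpa : ¬ ((p : ℕ) : ℤ) ∣ a := fun ⟨m, hm⟩ ↦ hα <| by
    have : ζ - 1 ∣ (a : 𝓞 K) := by rw [hm]; push_cast; exact hζp.mul_right _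
    simpa using dvd_add ha this
  obtain ⟨k, hk⟩ := exists_sub_one_sq_dvd_sub_pow_mul hp hζp hres hpa ha
  refine ⟨a, ?_⟩
  rw [hspan, Ideal.span_singleton_pow, Ideal.mem_span_singleton]
  exact hζ.sub_one_pow_succ_dvd_pow_sub_pow ha hk

theorem stmt1 (p : ℕ+) (hp : (p : ℕ).Prime) (hp2 : 2 < (p : ℕ))
    {K : Type*} [Field K] [NumberField K] [IsCyclotomicExtension {(p : ℕ)} ℚ K]
    (ζ : 𝓞 K) (hζ : IsPrimitiveRoot ζ (p : ℕ))
    (α : 𝓞 K) (hα : α ∉ Ideal.span {1 - ζ}) :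
    ∃ b : ℤ, α ^ (p : ℕ) - (b : 𝓞 K) ^ (p : ℕ) ∈ (Ideal.span {1 - ζ}) ^ ((p : ℕ) + 1) :=
  stmt1_general p hp ζ hζ α hα
end

section
/- Let p > 5 be prime and suppose x, y ∈ ℤ ∖ {0} are coprime with x/y > 0 and not both |x| = |y| = 1, or with x/y < 0. Then x^p + y^p ≠ x + y unless x = -y or {|x|,|y|} = {1}. In particular, for coprime x, y ∈ ℤ∖{0} with x + y ≢ 0 mod p and |x|,|y| not both 1, the algebraic integer x + ζ^g y (1 ≤ g ≤ p-1) is not a unit of ℤ[ζ]. -/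
/-!
If `x + ζ^g y` is a unit of `𝓞 K`, its norm `(x^p + y^p) / (x + y)` is `±1`. Since
`x^p + y^p ≡ x + y [ZMOD p]`, the sign `-1` forces `p ∣ x + y`. The sign `+1` gives
`x^p + y^p = x + y`: for `|y| < |x|` this is impossible because `|x|^p - |y|^p` outgrows
`|x| + |y|`, and for `|x| = |y|` it leaves `x = -y` or `x = y` with `x^p = x`, i.e. `|x| = 1`.
-/

open NumberField Polynomial

theorem Int.pow_add_add_lt_pow {a b : ℤ} (hb : 1 ≤ b) (hab : b < a) {n : ℕ} (hn : 3 ≤ n) :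
    b ^ n + a + b < a ^ n := by
  induction n, hn using Nat.le_induction with
  | base =>
    have hab1 : 1 ≤ a - b := by linarith
    have hsq : 0 ≤ a ^ 2 + a * b + b ^ 2 := by nlinarith
    nlinarith [mul_le_mul_of_nonneg_right hab1 hsq]
  | succ n _ ih =>
    have hbn : 0 < b ^ n := pow_pos (by linarith) n
    rw [pow_succ, pow_succ]
    nlinarith [mul_le_mul_of_nonneg_right hab.le hbn.le]

theorem Int.abs_eq_one_of_pow_add_pow_eq_add {n : ℕ} (hn : 3 ≤ n) {x y : ℤ} (hy : y ≠ 0)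
    (h : x ^ n + y ^ n = x + y) (hne : x ≠ -y) (hle : |y| ≤ |x|) : |x| = 1 := by
  have hy1 : 1 ≤ |y| := Int.one_le_abs hy
  rcases hle.lt_or_eq with hlt | heq
  · have hpow : |x| ^ n - |y| ^ n ≤ |x + y| := by
      rw [← h, ← abs_pow, ← abs_pow, ← abs_neg (y ^ n)]
      simpa using abs_sub_abs_le_abs_sub (x ^ n) (-y ^ n)
    linarith [abs_add_le x y, pow_add_add_lt_pow hy1 hlt hn]
  · obtain rfl : x = y := (abs_eq_abs.mp heq.symm).resolve_right hne
    have hxx : |x| ^ n = |x| ^ 1 := by rw [pow_one, ← abs_pow, show x ^ n = x by linarith]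
    by_contra hx1
    exact (pow_lt_pow_right₀ (lt_of_le_of_ne hy1 (Ne.symm hx1)) (by omega : 1 < n)).ne' hxx

theorem Int.eq_neg_or_abs_eq_one_of_pow_add_pow_eq_add {n : ℕ} (hn : 3 ≤ n) {x y : ℤ}
    (hx : x ≠ 0) (hy : y ≠ 0) (h : x ^ n + y ^ n = x + y) :
    x = -y ∨ (|x| = 1 ∧ |y| = 1) := by
  wlog hle : |y| ≤ |x| generalizing x y
  · rcases this hy hx (by linarith) (le_of_not_ge hle) with h' | ⟨hy1, hx1⟩
    · exact Or.inl (by linarith)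
    · exact Or.inr ⟨hx1, hy1⟩
  refine or_iff_not_imp_left.mpr fun hne => ?_
  have hx1 := abs_eq_one_of_pow_add_pow_eq_add hn hy h hne hle
  exact ⟨hx1, le_antisymm (hx1 ▸ hle) (Int.one_le_abs hy)⟩

theorem Int.dvd_add_of_pow_add_pow_eq_neg_add {p : ℕ} (hp : p.Prime) (hp2 : p ≠ 2) {x y : ℤ}
    (h : x ^ p + y ^ p = -(x + y)) : (p : ℤ) ∣ x + y := by
  have := Fact.mk hp
  have hzmod : ((x + y : ℤ) : ZMod p) = -((x + y : ℤ) : ZMod p) := by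
    simpa only [Int.cast_add, Int.cast_pow, Int.cast_neg, ZMod.pow_card] using
      congrArg (Int.cast : ℤ → ZMod p) h
  have htwo : (2 : ZMod p) ≠ 0 := Ring.two_ne_zero (by rwa [ZMod.ringChar_zmod_n])
  rw [← ZMod.intCast_zmod_eq_zero_iff_dvd]
  refine (mul_eq_zero.mp ?_).resolve_left htwo
  rw [two_mul]
  nth_rewrite 1 [hzmod]
  exact neg_add_cancel _

theorem IsPrimitiveRoot.norm_add_mul_mul_add {p : ℕ} (hp : p.Prime) (hodd : Odd p)
    {F L : Type*} [Field F] [Field L] [Algebra F L] [IsCyclotomicExtension {p} F L]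
    (hirr : Irreducible (cyclotomic p F)) {η : L} (hη : IsPrimitiveRoot η p) (x y : F) :
    Algebra.norm F (algebraMap F L x + η * algebraMap F L y) * (x + y) = x ^ p + y ^ p := by
  classical
  have := NeZero.mk hp.ne_zero
  let E := AlgebraicClosure L
  have := IsCyclotomicExtension.finiteDimensional {p} F L
  have := IsCyclotomicExtension.isGalois {p} F L
  have hηE : IsPrimitiveRoot (algebraMap L E η) p := hη.map_of_injective (algebraMap L E).injective
  have hprod : (∏ σ : L →ₐ[F] E, σ (algebraMap F L x + η * algebraMap F L y)) =
      ∏ z ∈ primitiveRoots p E, (algebraMap F E x + z * algebraMap F E y) := by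
    rw [← Finset.prod_coe_sort (primitiveRoots p E)]
    refine Fintype.prod_equiv (hη.embeddingsEquivPrimitiveRoots E hirr) _ _ fun σ => ?_
    simp
  apply (algebraMap F E).injective
  -- the conjugates of `η` are the primitive `p`-th roots; the factor `x + y` adds the root `1`
  rw [map_mul, Algebra.norm_eq_prod_embeddings F E, hprod, map_add, map_add, map_pow, map_pow,
    hηE.pow_add_pow_eq_prod_add_mul _ _ hodd, nthRootsFinset_eq_of_prime hp,
    Finset.prod_union (Finset.disjoint_singleton_right.mpr fun h =>
      hp.one_lt.ne' (IsPrimitiveRoot.one_left_iff.mp ((mem_primitiveRoots hp.pos).mp h))),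
    Finset.prod_singleton, one_mul]

theorem pow_add_pow_eq_add_or_eq_neg_of_isUnit {p : ℕ} (hp : p.Prime) (hodd : Odd p)
    {K : Type*} [Field K] [NumberField K] [IsCyclotomicExtension {p} ℚ K] {η : 𝓞 K}
    (hη : IsPrimitiveRoot η p) {x y : ℤ} (hu : IsUnit ((x : 𝓞 K) + η * y)) :
    x ^ p + y ^ p = x + y ∨ x ^ p + y ^ p = -(x + y) := by
  have hηK : IsPrimitiveRoot (η : K) p := hη.map_of_injective RingOfIntegers.coe_injective
  have hnorm := hηK.norm_add_mul_mul_add hp hodd (cyclotomic.irreducible_rat hp.pos) x y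
  have hunit := isUnit_iff_norm.mp hu
  rw [RingOfIntegers.coe_norm] at hunit
  push_cast [map_intCast] at hnorm hunit
  rcases (abs_eq zero_le_one).mp hunit with h | h <;> rw [h] at hnorm
  · left; exact_mod_cast hnorm.symm.trans (one_mul _)
  · right; exact_mod_cast hnorm.symm.trans (neg_one_mul _)

theorem stmt5_general (p : ℕ+) (hp : (p : ℕ).Prime) (hp5 : 5 < (p : ℕ))
    {K : Type*} [Field K] [NumberField K] [IsCyclotomicExtension {(p : ℕ)} ℚ K]
    (ζ : 𝓞 K) (hζ : IsPrimitiveRoot ζ (p : ℕ))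
    (x y : ℤ) (hx : x ≠ 0) (hy : y ≠ 0) :
    (x ^ (p : ℕ) + y ^ (p : ℕ) = x + y → x = -y ∨ (|x| = 1 ∧ |y| = 1)) ∧
    (¬ ((p : ℤ) ∣ x + y) → ¬ (|x| = 1 ∧ |y| = 1) →
      ∀ g : ℕ, 1 ≤ g → g ≤ (p : ℕ) - 1 →
        ¬ IsUnit ((x : 𝓞 K) + ζ ^ g * (y : 𝓞 K))) := by
  have hodd : Odd (p : ℕ) := hp.odd_of_ne_two (by omega)
  refine ⟨Int.eq_neg_or_abs_eq_one_of_pow_add_pow_eq_add (by omega) hx hy, ?_⟩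
  intro hpdvd hnot1 g hg1 hg2 hu
  have hζg : IsPrimitiveRoot (ζ ^ g) p :=
    hζ.pow_of_coprime g (Nat.coprime_of_lt_prime (by omega) (by omega) hp).symm
  rcases pow_add_pow_eq_add_or_eq_neg_of_isUnit hp hodd hζg hu with h | h
  · rcases Int.eq_neg_or_abs_eq_one_of_pow_add_pow_eq_add (by omega) hx hy h with rfl | h1
    · exact hpdvd (by simp)
    · exact hnot1 h1
  · exact hpdvd (Int.dvd_add_of_pow_add_pow_eq_neg_add hp (by omega) h)

theorem stmt5 (p : ℕ+) (hp : (p : ℕ).Prime) (hp5 : 5 < (p : ℕ))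
    {K : Type*} [Field K] [NumberField K] [IsCyclotomicExtension {(p : ℕ)} ℚ K]
    (ζ : 𝓞 K) (hζ : IsPrimitiveRoot ζ (p : ℕ))
    (x y : ℤ) (hx : x ≠ 0) (hy : y ≠ 0) (hxy : IsCoprime x y) :
    (x ^ (p : ℕ) + y ^ (p : ℕ) = x + y → x = -y ∨ (|x| = 1 ∧ |y| = 1)) ∧
    (¬ ((p : ℤ) ∣ x + y) → ¬ (|x| = 1 ∧ |y| = 1) →
      ∀ g : ℕ, 1 ≤ g → g ≤ (p : ℕ) - 1 →
        ¬ IsUnit ((x : 𝓞 K) + ζ ^ g * (y : 𝓞 K))) :=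
  stmt5_general p hp hp5 ζ hζ x y hx hy
end

section
/- Let p > 3 be a prime and suppose x, y, z are nonzero integers with x^p + y^p + z^p = 0, pairwise coprime, and p divides y. Then p² divides y. -/
/-!
As `p ∣ y` and `p ∤ z`, `p ∤ x + y`, so `S = (x ^ p + y ^ p) / (x + y)` is coprime to `x + y`
and hence a `p`-th power `t ^ p`. From `S (x + y) = x ^ p + y ^ p ≡ x + y (mod p)` we get
`t ≡ t ^ p = S ≡ 1 (mod p)`, so `S ≡ 1 (mod p²)` and `x + y ≡ S (x + y) = -z ^ p (mod p²)`;
symmetrically `z + y ≡ -x ^ p`. Lifting the exponent gives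
`v_p(x + z) = v_p(x ^ p + z ^ p) - 1 = p v_p(y) - 1 ≥ 2`, and adding the two congruences yields
`2 y ≡ -(x + z) - (x ^ p + z ^ p) ≡ 0 (mod p²)`.
-/

open Finset

theorem sub_dvd_geom_sum₂_sub {R : Type*} [CommRing R] (x y : R) (n : ℕ) :
    x - y ∣ ∑ i ∈ range n, x ^ i * y ^ (n - 1 - i) - n * y ^ (n - 1) := by
  rw [← Ideal.mem_span_singleton, ← Ideal.Quotient.eq]
  have hxy : Ideal.Quotient.mk (Ideal.span {x - y}) x = Ideal.Quotient.mk _ y :=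
    Ideal.Quotient.eq.mpr (Ideal.mem_span_singleton_self _)
  simp only [RingHom.map_geom_sum₂, hxy, geom_sum₂_self, map_mul, map_pow, map_natCast]

theorem isCoprime_geom_sum₂_sub {R : Type*} [CommRing R] {x y : R} {n : ℕ}
    (hxy : IsCoprime x y) (hn : IsCoprime (n : R) (x - y)) :
    IsCoprime (∑ i ∈ range n, x ^ i * y ^ (n - 1 - i)) (x - y) := by
  obtain ⟨k, hk⟩ := sub_dvd_geom_sum₂_sub x y n
  have hy : IsCoprime y (x - y) := by
    simpa [sub_eq_add_neg, add_comm] using hxy.symm.add_mul_left_right (-1)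
  rw [← sub_add_cancel (∑ i ∈ range n, x ^ i * y ^ (n - 1 - i)) (n * y ^ (n - 1)), hk,
    add_comm]
  exact (hn.mul_left hy.pow_left).add_mul_left_left k

namespace Int

variable {p : ℕ}

theorem prime_dvd_add_add_of_pow_add_pow_add_pow_eq_zero (hp : p.Prime) {a b c : ℤ}
    (h : a ^ p + b ^ p + c ^ p = 0) : (p : ℤ) ∣ a + b + c := by
  have hdvd := dvd_add (dvd_add (prime_dvd_pow_self_sub hp a) (prime_dvd_pow_self_sub hp b))
    (prime_dvd_pow_self_sub hp c)
  rwa [show a ^ p - a + (b ^ p - b) + (c ^ p - c) = -(a + b + c) by linear_combination h,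
    dvd_neg] at hdvd

theorem sq_dvd_pow_sub_one_of_dvd (hp : p.Prime) {t : ℤ} (h : (p : ℤ) ∣ t ^ p - 1) :
    (p : ℤ) ^ 2 ∣ t ^ p - 1 := by
  have ht : (p : ℤ) ∣ t - 1 := by
    simpa using dvd_sub h (prime_dvd_pow_self_sub hp t)
  simpa using dvd_sub_pow_of_dvd_sub ht 1

theorem exists_pow_eq_of_mul_eq_pow (hodd : Odd p) {a b c : ℤ} (hab : IsCoprime a b)
    (h : a * b = c ^ p) : ∃ t : ℤ, t ^ p = a := by
  obtain ⟨d, hd⟩ := exists_associated_pow_of_mul_eq_pow' hab h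
  rcases associated_iff.mp hd with hd | hd
  · exact ⟨d, hd⟩
  · exact ⟨-d, by rw [hodd.neg_pow, hd, neg_neg]⟩

theorem sq_dvd_add_add_pow_of_pow_add_pow_add_pow_eq_zero (hp : p.Prime) (hodd : Odd p)
    {a b c : ℤ} (hab : IsCoprime a b) (h : a ^ p + b ^ p + c ^ p = 0) (hpc : ¬ (p : ℤ) ∣ c) :
    (p : ℤ) ^ 2 ∣ a + b + c ^ p := by
  have hP : Prime (p : ℤ) := Nat.prime_iff_prime_int.mp hp
  set S := ∑ i ∈ Finset.range p, a ^ i * (-b) ^ (p - 1 - i)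
  have hS : S * (a + b) = a ^ p + b ^ p := by
    simpa [hodd.neg_pow] using geom_sum₂_mul a (-b) p
  have hpab : ¬ (p : ℤ) ∣ a + b := fun hd =>
    hpc ((dvd_add_right hd).mp (prime_dvd_add_add_of_pow_add_pow_add_pow_eq_zero hp h))
  have hcop : IsCoprime S (a + b) := by
    simpa using isCoprime_geom_sum₂_sub hab.neg_right
      (hP.coprime_iff_not_dvd.mpr (by simpa using hpab))
  obtain ⟨t, ht⟩ := exists_pow_eq_of_mul_eq_pow hodd hcop
    (c := -c) (by rw [hS, hodd.neg_pow]; linear_combination h)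
  rw [← ht] at hS
  have hS1 : (p : ℤ) ∣ t ^ p - 1 := by
    refine (hP.dvd_or_dvd ?_).resolve_right hpab
    rw [show (t ^ p - 1) * (a + b) = (a ^ p - a) + (b ^ p - b) by linear_combination hS]
    exact dvd_add (prime_dvd_pow_self_sub hp a) (prime_dvd_pow_self_sub hp b)
  rw [show a + b + c ^ p = -((t ^ p - 1) * (a + b)) by linear_combination h + hS, dvd_neg]
  exact (sq_dvd_pow_sub_one_of_dvd hp hS1).mul_right _

theorem pow_dvd_add_of_pow_succ_dvd_pow_add_pow (hp : p.Prime) (hodd : Odd p) {x z : ℤ}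
    (hxz : (p : ℤ) ∣ x + z) (hx : ¬ (p : ℤ) ∣ x) {k : ℕ} (h : (p : ℤ) ^ (k + 1) ∣ x ^ p + z ^ p) :
    (p : ℤ) ^ k ∣ x + z := by
  rw [pow_dvd_iff_le_emultiplicity, emultiplicity_pow_add_pow hp hodd hxz hx hodd,
    hp.emultiplicity_self, Nat.cast_add, Nat.cast_one] at h
  exact pow_dvd_iff_le_emultiplicity.mpr ((ENat.add_le_add_iff_right ENat.one_ne_top).mp h)

end Int

theorem stmt9_general (p : ℕ) (hp : p.Prime) (hp3 : 3 < p)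
    (x y z : ℤ) (hxy : IsCoprime x y) (hyz : IsCoprime y z)
    (h : x ^ p + y ^ p + z ^ p = 0) (hpy : (p : ℤ) ∣ y) :
    (p : ℤ) ^ 2 ∣ y := by
  have hodd : Odd p := hp.odd_of_ne_two (by omega)
  have hP : Prime (p : ℤ) := Nat.prime_iff_prime_int.mp hp
  have hpx : ¬ (p : ℤ) ∣ x := fun hd => hP.not_isUnit (hxy.isUnit_of_dvd' hd hpy)
  have hpz : ¬ (p : ℤ) ∣ z := fun hd => hP.not_isUnit (hyz.isUnit_of_dvd' hpy hd)
  have hxy2 := Int.sq_dvd_add_add_pow_of_pow_add_pow_add_pow_eq_zero hp hodd hxy h hpz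
  have hzy2 := Int.sq_dvd_add_add_pow_of_pow_add_pow_add_pow_eq_zero hp hodd hyz.symm
    (by linear_combination h) hpx
  have hy3 : (p : ℤ) ^ 3 ∣ x ^ p + z ^ p := by
    rw [show x ^ p + z ^ p = -y ^ p by linear_combination h, dvd_neg]
    exact (pow_dvd_pow _ hp3.le).trans (pow_dvd_pow_of_dvd hpy p)
  have hxz2 : (p : ℤ) ^ 2 ∣ x + z := by
    refine Int.pow_dvd_add_of_pow_succ_dvd_pow_add_pow hp hodd ?_ hpx hy3
    have := dvd_sub (Int.prime_dvd_add_add_of_pow_add_pow_add_pow_eq_zero hp h) hpy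
    rwa [add_right_comm, add_sub_cancel_right] at this
  have h2y : (p : ℤ) ^ 2 ∣ 2 * y := by
    rw [show 2 * y = (x + y + z ^ p) + (z + y + x ^ p) - (x + z) - (x ^ p + z ^ p) by ring]
    exact dvd_sub (dvd_sub (dvd_add hxy2 hzy2) hxz2) ((pow_dvd_pow _ (by norm_num)).trans hy3)
  have hp2 : IsCoprime ((p : ℤ) ^ 2) 2 :=
    (hP.coprime_iff_not_dvd.mpr fun hd => by have := Int.le_of_dvd two_pos hd; omega).pow_left
  exact hp2.dvd_of_dvd_mul_left h2y

theorem stmt9 (p : ℕ) (hp : p.Prime) (hp3 : 3 < p)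
    (x y z : ℤ) (hx : x ≠ 0) (hy : y ≠ 0) (hz : z ≠ 0)
    (hxy : IsCoprime x y) (hyz : IsCoprime y z) (hxz : IsCoprime x z)
    (h : x ^ p + y ^ p + z ^ p = 0) (hpy : (p : ℤ) ∣ y) :
    (p : ℤ) ^ 2 ∣ y :=
  stmt9_general p hp hp3 x y z hxy hyz h hpy
end

section
/- Let p be an odd prime, u a primitive root mod p, and for 1 ≤ d ≤ p-2 set I(d) = { i : 1 ≤ i ≤ p-1, u_{ν-i} + (d·u_{ν-i} mod p) > p } where ν = (p-1)/2 and u_k denotes the residue of u^k in {1,...,p-1}. Then for each i with 1 ≤ i ≤ p-1, exactly one of i and i' ≡ i + (p-1)/2 (mod p-1, normalized to {1,...,p-1}) belongs to I(d); consequently |I(d)| = (p-1)/2. -/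
/-!
Write `x i = u ^ (ν + 2ν - i)` in `ZMod p`, so that `r i = (x i).val` and `d * r i % p = (d * x i).val`.
Shifting `i` by `ν` (cyclically in `[1, 2ν]`) multiplies `x i` by `u ^ ν = -1`, and negating two
nonzero residues `x, y` turns `x.val + y.val` into `2p - (x.val + y.val)`. Since `d ≠ -1` in `ZMod p`,
`x.val + (d * x).val ≠ p`, so exactly one of `i` and its shift lies in `I`, and the shift pairs off
`I` with its complement in `[1, 2ν]`.
-/

open Finset

theorem IsPrimitiveRoot.pow_half_eq_neg_one {R : Type*} [CommRing R] [NoZeroDivisors R] {ζ : R}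
    {ν : ℕ} (hν : ν ≠ 0) (h : IsPrimitiveRoot ζ (2 * ν)) : ζ ^ ν = -1 := by
  have := h.pow_of_dvd hν (dvd_mul_left ν 2)
  rw [Nat.mul_div_cancel _ (Nat.pos_of_ne_zero hν)] at this
  exact this.eq_neg_one_of_two_right

theorem ZMod.val_add_val_ne_of_add_ne_zero {n : ℕ} [NeZero n] {x y : ZMod n} (hxy : x + y ≠ 0) :
    x.val + y.val ≠ n := by
  intro h
  apply hxy
  rw [← ZMod.natCast_zmod_val x, ← ZMod.natCast_zmod_val y, ← Nat.cast_add, h, ZMod.natCast_self]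

theorem ZMod.xor_lt_val_add_val_neg {n : ℕ} [NeZero n] {x y : ZMod n} (hx : x ≠ 0) (hy : y ≠ 0)
    (hxy : x + y ≠ 0) : Xor (n < x.val + y.val) (n < (-x).val + (-y).val) := by
  have hne := ZMod.val_add_val_ne_of_add_ne_zero hxy
  have hxn := x.val_lt
  have hyn := y.val_lt
  rw [ZMod.neg_val, ZMod.neg_val, if_neg hx, if_neg hy]
  rw [xor_def]
  omega

theorem ZMod.xor_lt_val_add_val_mul_neg {p : ℕ} [Fact p.Prime] {x c : ZMod p} (hx : x ≠ 0)
    (hc₀ : c ≠ 0) (hc₁ : c ≠ -1) :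
    Xor (p < x.val + (c * x).val) (p < (-x).val + (c * -x).val) := by
  rw [mul_neg]
  refine ZMod.xor_lt_val_add_val_neg hx (mul_ne_zero hc₀ hx) ?_
  rw [← one_add_mul]
  exact mul_ne_zero (fun h => hc₁ (eq_neg_of_add_eq_zero_right h)) hx

theorem Finset.two_mul_card_eq_of_xor_involution {α : Type*} [DecidableEq α] {s t : Finset α}
    (σ : α → α) (hts : t ⊆ s) (hσ : ∀ i ∈ s, σ i ∈ s) (hσσ : ∀ i ∈ s, σ (σ i) = i)
    (hxor : ∀ i ∈ s, Xor (i ∈ t) (σ i ∈ t)) : 2 * t.card = s.card := by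
  have hcompl : t.card = (s \ t).card := by
    refine card_nbij' σ σ (fun i hi => ?_) (fun i hi => ?_) (fun i hi => hσσ i (hts hi))
      (fun i hi => hσσ i (mem_sdiff.mp hi).1)
    · have hi : i ∈ t := hi
      simp only [coe_sdiff, Set.mem_sdiff, mem_coe]
      exact ⟨hσ i (hts hi), (xor_iff_iff_not.mp (hxor i (hts hi))).mp hi⟩
    · obtain ⟨his, hit⟩ := mem_sdiff.mp hi
      exact (xor_iff_not_iff'.mp (hxor i his)).mp hit
  rw [card_sdiff_of_subset hts] at hcompl
  have := card_le_card hts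
  omega

def halfShift (ν i : ℕ) : ℕ := if i + ν ≤ 2 * ν then i + ν else i + ν - 2 * ν

section halfShift

variable {ν i : ℕ}

theorem halfShift_mem_Icc (hi : i ∈ Icc 1 (2 * ν)) : halfShift ν i ∈ Icc 1 (2 * ν) := by
  rw [mem_Icc] at hi ⊢
  unfold halfShift
  split_ifs <;> omega

theorem halfShift_halfShift (hi : i ∈ Icc 1 (2 * ν)) : halfShift ν (halfShift ν i) = i := by
  rw [mem_Icc] at hi
  unfold halfShift
  split_ifs <;> omega

theorem pow_sub_halfShift {M : Type*} [Monoid M] [HasDistribNeg M] {ζ : M} (hζ : ζ ^ ν = -1)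
    (hi : i ∈ Icc 1 (2 * ν)) : ζ ^ (ν + 2 * ν - halfShift ν i) = -ζ ^ (ν + 2 * ν - i) := by
  rw [mem_Icc] at hi
  unfold halfShift
  split_ifs
  · rw [show ν + 2 * ν - i = ν + 2 * ν - (i + ν) + ν by omega, pow_add, hζ, mul_neg_one, neg_neg]
  · rw [show ν + 2 * ν - (i + ν - 2 * ν) = ν + 2 * ν - i + ν by omega, pow_add, hζ, mul_neg_one]

end halfShift

theorem stmt10_general (p : ℕ) (hp : p.Prime) (u : ℕ)
    (hu : IsPrimitiveRoot (u : ZMod p) (p - 1)) (d : ℕ) (hd1 : 1 ≤ d) (hd2 : d ≤ p - 2)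
    (r : ℕ → ℕ) (hr : ∀ i, r i = u ^ ((p - 1) / 2 + (p - 1) - i) % p)
    (I : Finset ℕ)
    (hI : I = (Finset.Icc 1 (p - 1)).filter (fun i => p < r i + d * r i % p)) :
    (∀ i ∈ Finset.Icc 1 (p - 1),
        Xor' (i ∈ I)
          ((if i + (p - 1) / 2 ≤ p - 1 then i + (p - 1) / 2
            else i + (p - 1) / 2 - (p - 1)) ∈ I)) ∧
    I.card = (p - 1) / 2 := by
  have : Fact p.Prime := ⟨hp⟩
  obtain ⟨ν, hpν⟩ := hp.eq_two_or_odd'.resolve_left (by omega)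
  have hp1 : p - 1 = 2 * ν := by omega
  have hν : (p - 1) / 2 = ν := by omega
  rw [hp1] at hu hI
  rw [hν, hp1] at hr ⊢
  set x : ℕ → ZMod p := fun i => (u : ZMod p) ^ (ν + 2 * ν - i)
  have hx : ∀ i, x i ≠ 0 := fun i => pow_ne_zero _ (hu.ne_zero (by omega))
  have hxσ : ∀ i ∈ Icc 1 (2 * ν), x (halfShift ν i) = -x i := fun i hi =>
    pow_sub_halfShift (hu.pow_half_eq_neg_one (by omega)) hi
  have hrx : ∀ i, r i = (x i).val := fun i => by simp only [hr, x, ← ZMod.val_natCast, Nat.cast_pow]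
  have hdrx : ∀ i, d * (x i).val % p = ((d : ZMod p) * x i).val := fun i => by
    rw [← ZMod.val_natCast, Nat.cast_mul, ZMod.natCast_zmod_val]
  have hd₀ : (d : ZMod p) ≠ 0 := by
    rw [Ne, ZMod.natCast_eq_zero_iff]; exact Nat.not_dvd_of_pos_of_lt hd1 (by omega)
  have hd₁ : (d : ZMod p) ≠ -1 := by
    rw [Ne, eq_neg_iff_add_eq_zero, ← Nat.cast_succ, ZMod.natCast_eq_zero_iff]
    exact Nat.not_dvd_of_pos_of_lt (by omega) (by omega)
  have hxor : ∀ i ∈ Icc 1 (2 * ν), Xor (i ∈ I) (halfShift ν i ∈ I) := fun i hi => by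
    simp only [hI, mem_filter, hrx, hdrx, hxσ i hi, hi, halfShift_mem_Icc hi, true_and]
    exact ZMod.xor_lt_val_add_val_mul_neg (hx i) hd₀ hd₁
  refine ⟨hxor, ?_⟩
  have := two_mul_card_eq_of_xor_involution (halfShift ν) (hI ▸ filter_subset _ _)
    (fun i => halfShift_mem_Icc) (fun i => halfShift_halfShift) hxor
  rw [Nat.card_Icc] at this
  omega

theorem stmt10 (p : ℕ) (hp : p.Prime) (hodd : Odd p) (u : ℕ)
    (hu : IsPrimitiveRoot (u : ZMod p) (p - 1)) (d : ℕ) (hd1 : 1 ≤ d) (hd2 : d ≤ p - 2)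
    (r : ℕ → ℕ) (hr : ∀ i, r i = u ^ ((p - 1) / 2 + (p - 1) - i) % p)
    (I : Finset ℕ)
    (hI : I = (Finset.Icc 1 (p - 1)).filter (fun i => p < r i + d * r i % p)) :
    (∀ i ∈ Finset.Icc 1 (p - 1),
        Xor' (i ∈ I)
          ((if i + (p - 1) / 2 ≤ p - 1 then i + (p - 1) / 2
            else i + (p - 1) / 2 - (p - 1)) ∈ I)) ∧
    I.card = (p - 1) / 2 :=
  stmt10_general p hp u hu d hd1 hd2 r hr I hI
end

section
/- Let p be an odd prime and 1 ≤ d ≤ p-2. With I(d) defined as the set of i ∈ {1,...,p-1} such that u_{ν-i} + (d·u_{ν-i} mod p) > p (u a primitive root mod p, ν = (p-1)/2), one has I(d) = I(p-1-d). -/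
/-!
Write `r` for the residue of `u ^ (ν - i)`, `s = d * r mod p` and `t = (p - 1 - d) * r mod p`.
Since `r + d * r + (p - 1 - d) * r = p * r`, the sum `r + s + t` is a multiple of `p` below `3 p`.
Hence `r + s > p` and `r + t > p` both say that this sum is `2 p`.
-/

theorem lt_add_iff_lt_add_of_dvd_add_add {p a b c : ℕ} (ha : a < p) (hb : b < p) (hc : c < p)
    (hdvd : p ∣ a + b + c) : p < a + b ↔ p < a + c := by
  obtain ⟨m, hm⟩ := hdvd
  have hm3 : m < 3 := Nat.lt_of_mul_lt_mul_left (a := p) (by omega)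
  interval_cases m <;> omega

theorem dvd_add_mul_mod_add_sub_mul_mod {p d : ℕ} (r : ℕ) (hd : d < p) :
    p ∣ r + d * r % p + (p - 1 - d) * r % p := by
  have hsum : r + d * r + (p - 1 - d) * r = p * r :=
    calc r + d * r + (p - 1 - d) * r = (1 + d + (p - 1 - d)) * r := by ring
      _ = p * r := by congr 1; omega
  have hmod : r + d * r % p + (p - 1 - d) * r % p ≡ p * r [MOD p] :=
    hsum ▸ ((Nat.ModEq.refl r).add (Nat.mod_modEq _ _)).add (Nat.mod_modEq _ _)
  exact Nat.dvd_of_mod_eq_zero (Eq.trans hmod (Nat.mul_mod_right p r))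

theorem lt_add_mul_mod_iff_lt_add_sub_mul_mod {p r d : ℕ} (hr : r < p) (hd : d ≤ p - 1) :
    p < r + d * r % p ↔ p < r + (p - 1 - d) * r % p :=
  lt_add_iff_lt_add_of_dvd_add_add hr (Nat.mod_lt _ (by omega)) (Nat.mod_lt _ (by omega))
    (dvd_add_mul_mod_add_sub_mul_mod r (by omega))

theorem stmt11_general (p : ℕ) (u : ℕ)
    (d : ℕ) (hd2 : d ≤ p - 2) :
    (Finset.Icc 1 (p - 1)).filter
        (fun i => p < u ^ ((p - 1) / 2 + (p - 1) - i) % p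
          + d * (u ^ ((p - 1) / 2 + (p - 1) - i) % p) % p)
      = (Finset.Icc 1 (p - 1)).filter
        (fun i => p < u ^ ((p - 1) / 2 + (p - 1) - i) % p
          + (p - 1 - d) * (u ^ ((p - 1) / 2 + (p - 1) - i) % p) % p) := by
  ext i
  simp only [Finset.mem_filter]
  refine and_congr_right fun hi => ?_
  have hp : 0 < p := by
    rw [Finset.mem_Icc] at hi
    omega
  exact lt_add_mul_mod_iff_lt_add_sub_mul_mod (Nat.mod_lt _ hp) (by omega)

theorem stmt11 (p : ℕ) (hp : p.Prime) (hodd : Odd p) (u : ℕ)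
    (hu : IsPrimitiveRoot (u : ZMod p) (p - 1)) (d : ℕ) (hd1 : 1 ≤ d) (hd2 : d ≤ p - 2) :
    (Finset.Icc 1 (p - 1)).filter
        (fun i => p < u ^ ((p - 1) / 2 + (p - 1) - i) % p
          + d * (u ^ ((p - 1) / 2 + (p - 1) - i) % p) % p)
      = (Finset.Icc 1 (p - 1)).filter
        (fun i => p < u ^ ((p - 1) / 2 + (p - 1) - i) % p
          + (p - 1 - d) * (u ^ ((p - 1) / 2 + (p - 1) - i) % p) % p) :=
  stmt11_general p u d hd2
end

section
/- Let p be an odd prime and 2m an even integer with 1 ≤ m ≤ (p-3)/2. For d ∈ {1, ..., p-2}, the following congruence holds modulo p: Σ_{j ∈ S(d)} 1/j^{2m+1} ≡ [ (d(d^{2m}-1) - (d+1)((d+1)^{2m}-1)) / (p-1-2m) ] · B_{p-1-2m} mod p, where S(d) = { j : 1 ≤ j ≤ p-1, ∃ l ∈ {1,...,d}, lp/(d+1) ≤ j < lp/d } and B_{p-1-2m} is the Bernoulli number, assuming the standard Vandiver congruence Σ_{l=1}^{d-1} Σ_{1≤j<lp/d} 1/j^{2m+1} ≡ d(d^{2m}-1)B_{p-1-2m}/(p-1-2m)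 mod p holds for all d. -/
private lemma zmod_sum_inv_pow (p : ℕ) [hp : Fact p.Prime] (k : ℕ) (hk0 : 0 < k)
    (hk : k < p - 1) :
    ∑ j ∈ Finset.Icc 1 (p - 1), ((j : ZMod p) ^ k)⁻¹ = 0 := by
  have hp1 : 1 ≤ p := hp.out.pos
  have hIcc : Finset.Icc 1 (p - 1) = Finset.Ico 1 p := by
    ext x; simp [Finset.mem_Icc, Finset.mem_Ico]; omega
  have hins : Finset.range p = insert 0 (Finset.Ico 1 p) := by
    ext x; simp [Finset.mem_range, Finset.mem_Ico]; omega
  have h0 : (((0 : ℕ) : ZMod p) ^ k)⁻¹ = 0 := by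
    simp [zero_pow (by omega : k ≠ 0)]
  have h1 : ∑ j ∈ Finset.Ico 1 p, ((j : ZMod p) ^ k)⁻¹
      = ∑ j ∈ Finset.range p, ((j : ZMod p) ^ k)⁻¹ := by
    rw [hins, Finset.sum_insert (by simp)]
    rw [h0, zero_add]
  have h2 : ∑ j ∈ Finset.range p, ((j : ZMod p) ^ k)⁻¹
      = ∑ x : ZMod p, (x ^ k)⁻¹ := by
    refine Finset.sum_nbij' (i := fun j : ℕ => ((j : ZMod p)))
      (j := fun x : ZMod p => x.val) ?_ ?_ ?_ ?_ ?_
    · intro a _; exact Finset.mem_univ _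
    · intro x _; simp [Finset.mem_range, ZMod.val_lt]
    · intro a ha
      simp only [Finset.mem_range] at ha
      exact ZMod.val_cast_of_lt ha
    · intro x _
      simp [ZMod.natCast_val, ZMod.cast_id]
    · intro a _; rfl
  have h3 : ∑ x : ZMod p, (x ^ k)⁻¹ = ∑ x : ZMod p, x ^ k := by
    rw [show (fun x : ZMod p => (x ^ k)⁻¹) = fun x : ZMod p => (x⁻¹) ^ k by
      funext x; rw [inv_pow]]
    exact Finset.sum_equiv (Equiv.inv (ZMod p)) (by simp) (by intro i _; rfl)
  have h4 : ∑ x : ZMod p, x ^ k = 0 := by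
    apply FiniteField.sum_pow_lt_card_sub_one
    rwa [ZMod.card]
  rw [hIcc, h1, h2, h3, h4]

open Classical in
theorem stmt13 (p : ℕ) [hp : Fact p.Prime] (hodd : Odd p) (m : ℕ)
    (hm1 : 1 ≤ m) (hm2 : m ≤ (p - 3) / 2) (d : ℕ) (hd1 : 1 ≤ d) (hd2 : d ≤ p - 2)
    (hvandiver : ∀ e : ℕ, 1 ≤ e → e ≤ p - 1 →
      (∑ l ∈ Finset.Icc 1 (e - 1),
          ∑ j ∈ (Finset.Ico 1 (l * p)).filter (fun j => j * e < l * p),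
            ((j : ZMod p) ^ (2 * m + 1))⁻¹)
        = (e : ZMod p) * ((e : ZMod p) ^ (2 * m) - 1) * (((p - 1 - 2 * m : ℕ) : ZMod p))⁻¹ *
            ((bernoulli (p - 1 - 2 * m) : ℚ) : ZMod p)) :
    ∑ j ∈ (Finset.Icc 1 (p - 1)).filter
        (fun j => ∃ l ∈ Finset.Icc 1 d, l * p ≤ j * (d + 1) ∧ j * d < l * p),
        ((j : ZMod p) ^ (2 * m + 1))⁻¹
      = ((d : ZMod p) * ((d : ZMod p) ^ (2 * m) - 1)
          - ((d : ZMod p) + 1) * (((d : ZMod p) + 1) ^ (2 * m) - 1)) *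
          (((p - 1 - 2 * m : ℕ) : ZMod p))⁻¹ *
          ((bernoulli (p - 1 - 2 * m) : ℚ) : ZMod p) := by
  have hpp : p.Prime := hp.out
  have hp5 : 5 ≤ p := by have := hpp.two_le; omega
  set f : ℕ → ZMod p := fun j => ((j : ZMod p) ^ (2 * m + 1))⁻¹ with hf
  set T : ℕ → Finset ℕ :=
    fun l => (Finset.Icc 1 (p - 1)).filter (fun j => l * p ≤ j * (d + 1) ∧ j * d < l * p)
    with hT
  set V : ℕ → ℕ → Finset ℕ :=
    fun e l => (Finset.Ico 1 (l * p)).filter (fun j => j * e < l * p) with hV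
  -- Step 1: rewrite LHS as a double sum
  have key : ∀ a b j : ℕ, j < p → a * p ≤ j * (d + 1) → j * d < b * p → a ≤ b := by
    intro a b j hjp ha hb
    have h1 : a * p < (b + 1) * p := by
      calc a * p ≤ j * (d + 1) := ha
        _ = j * d + j := by ring
        _ < b * p + p := Nat.add_lt_add hb hjp
        _ = (b + 1) * p := by ring
    have := Nat.lt_of_mul_lt_mul_right h1
    omega
  have hdisj : (↑(Finset.Icc 1 d) : Set ℕ).PairwiseDisjoint T := by
    intro l1 h1 l2 h2 hne
    rw [Function.onFun, Finset.disjoint_left]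
    intro j hj1 hj2
    simp only [hT, Finset.mem_filter, Finset.mem_Icc] at hj1 hj2
    obtain ⟨⟨hj1a, hj1b⟩, hL1, hR1⟩ := hj1
    obtain ⟨_, hL2, hR2⟩ := hj2
    have hjp : j < p := by omega
    have := key l1 l2 j hjp hL1 hR2
    have := key l2 l1 j hjp hL2 hR1
    omega
  have hset1 : (Finset.Icc 1 (p - 1)).filter
      (fun j => ∃ l ∈ Finset.Icc 1 d, l * p ≤ j * (d + 1) ∧ j * d < l * p)
      = (Finset.Icc 1 d).biUnion T := by
    ext j
    simp only [hT, Finset.mem_filter, Finset.mem_biUnion]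
    tauto
  rw [hset1, Finset.sum_biUnion hdisj]
  -- Step 2: per-l decomposition
  have hsplit : ∀ l ∈ Finset.Icc 1 d,
      (∑ j ∈ T l, f j) = (∑ j ∈ V d l, f j) - ∑ j ∈ V (d + 1) l, f j := by
    intro l hl
    rw [Finset.mem_Icc] at hl
    have hUnion : V d l = V (d + 1) l ∪ T l := by
      ext j
      simp only [hV, hT, Finset.mem_filter, Finset.mem_Ico, Finset.mem_Icc, Finset.mem_union]
      constructor
      · rintro ⟨⟨hj1, hj2⟩, hjd⟩
        by_cases hcase : j * (d + 1) < l * p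
        · exact Or.inl ⟨⟨hj1, hj2⟩, hcase⟩
        · refine Or.inr ⟨⟨hj1, ?_⟩, by omega, hjd⟩
          have h1 : l * p ≤ d * p := Nat.mul_le_mul_right p hl.2
          have h2 : d * j < d * p := by
            calc d * j = j * d := mul_comm d j
              _ < l * p := hjd
              _ ≤ d * p := h1
          have := Nat.lt_of_mul_lt_mul_left h2
          omega
      · rintro (⟨⟨hj1, hj2⟩, hjd1⟩ | ⟨⟨hj1, hj2⟩, hl1, hjd⟩)
        · refine ⟨⟨hj1, hj2⟩, ?_⟩
          have : j * d ≤ j * (d + 1) := Nat.mul_le_mul_left j (by omega)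
          omega
        · refine ⟨⟨hj1, ?_⟩, hjd⟩
          have : j ≤ j * d := Nat.le_mul_of_pos_right j (by omega)
          omega
    have hdisj2 : Disjoint (V (d + 1) l) (T l) := by
      rw [Finset.disjoint_left]
      intro j hj1 hj2
      simp only [hV, hT, Finset.mem_filter, Finset.mem_Ico, Finset.mem_Icc] at hj1 hj2
      omega
    rw [hUnion, Finset.sum_union hdisj2]
    ring
  rw [Finset.sum_congr rfl hsplit, Finset.sum_sub_distrib]
  -- Step 3: split off top term of the V d sum
  have hins : Finset.Icc 1 d = insert d (Finset.Icc 1 (d - 1)) := by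
    ext x; simp only [Finset.mem_Icc, Finset.mem_insert]; omega
  have hnotmem : d ∉ Finset.Icc 1 (d - 1) := by simp; omega
  have hVdd : V d d = Finset.Icc 1 (p - 1) := by
    ext j
    simp only [hV, Finset.mem_filter, Finset.mem_Ico, Finset.mem_Icc]
    constructor
    · rintro ⟨⟨h1, h2⟩, h3⟩
      have h4 : j * d < p * d := by
        calc j * d < d * p := h3
          _ = p * d := mul_comm d p
      have := Nat.lt_of_mul_lt_mul_right h4
      omega
    · rintro ⟨h1, h2⟩
      have hjp : j < p := by omega
      have h3 : j * d < d * p := by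
        calc j * d < p * d := Nat.mul_lt_mul_of_pos_right hjp (by omega)
          _ = d * p := mul_comm p d
      have h4 : p ≤ d * p := Nat.le_mul_of_pos_left p (by omega)
      exact ⟨⟨h1, by omega⟩, h3⟩
  have hzero : ∑ j ∈ Finset.Icc 1 (p - 1), f j = 0 := by
    apply zmod_sum_inv_pow p (2 * m + 1) (by omega)
    omega
  have htop : ∑ l ∈ Finset.Icc 1 d, ∑ j ∈ V d l, f j
      = ∑ l ∈ Finset.Icc 1 (d - 1), ∑ j ∈ V d l, f j := by
    rw [hins, Finset.sum_insert hnotmem, hVdd, hzero, zero_add]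
  rw [htop]
  -- Step 4: apply Vandiver's congruence twice
  have hA := hvandiver d hd1 (by omega)
  have hB := hvandiver (d + 1) (by omega) (by omega)
  rw [Nat.add_sub_cancel] at hB
  rw [hA, hB]
  push_cast
  ring
end

section
/- Let p > 3 be a prime and t an integer with t(t-1)(t+1) ≢ 0 mod p. If φ_{p-1}(t) ≡ 0 mod p and φ_{p-1}(t²) ≡ 0 mod p, where φ_{p-1}(T) = Σ_{i=1}^{p-1} i^{p-2} T^i, then 1 + t^p - (1+t)^p ≡ 0 mod p², i.e., φ_{p-1}(-t) ≡ 0 mod p. -/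
open Finset

private lemma choose_sub_one_zmod (p : ℕ) (hp : p.Prime) :
    ∀ k, k < p → (((p - 1).choose k : ZMod p) = (-1) ^ k) := by
  intro k
  induction k with
  | zero => simp
  | succ k ih =>
    intro hk
    have hk' : k < p := by omega
    have hpas : Nat.choose p (k + 1) = (p - 1).choose k + (p - 1).choose (k + 1) := by
      have h : p = (p - 1) + 1 := by omega
      rw [h, Nat.choose_succ_succ]
      simp
    have hdvd : p ∣ Nat.choose p (k + 1) :=
      Nat.Prime.dvd_choose_self hp (Nat.succ_ne_zero k) hk
    have h0 : ((Nat.choose p (k + 1) : ZMod p)) = 0 := by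
      exact_mod_cast (ZMod.natCast_eq_zero_iff _ _).mpr hdvd
    rw [hpas] at h0
    push_cast at h0
    rw [ih hk'] at h0
    have : ((p - 1).choose (k + 1) : ZMod p) = -(-1) ^ k := by linear_combination h0
    rw [this, pow_succ]
    ring

private lemma term_dvd (p : ℕ) (hp : p.Prime) (k : ℕ) (hk1 : 1 ≤ k) (hk2 : k ≤ p - 1) :
    (p : ℤ) ^ 2 ∣ (-1) ^ k * (Nat.choose p k : ℤ) + (p : ℤ) * (k : ℤ) ^ (p - 2) := by
  haveI : Fact p.Prime := ⟨hp⟩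
  have hp2 : 2 ≤ p := hp.two_le
  have hkp : k < p := by omega
  obtain ⟨m, hm⟩ := Nat.Prime.dvd_choose_self hp (by omega : k ≠ 0) hkp
  have hmk : (p - 1).choose (k - 1) = m * k := by
    have h1 : p * (p - 1).choose (k - 1) = Nat.choose p k * k := by
      have hps : p = Nat.succ (p - 1) := by omega
      have hks : k = Nat.succ (k - 1) := by omega
      calc p * (p - 1).choose (k - 1)
          = Nat.succ (p - 1) * (p - 1).choose (k - 1) := by rw [← hps]
        _ = Nat.choose (Nat.succ (p - 1)) (Nat.succ (k - 1)) * Nat.succ (k - 1) :=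
            Nat.add_one_mul_choose_eq _ _
        _ = Nat.choose p k * k := by rw [← hps, ← hks]
    rw [hm] at h1
    have := Nat.eq_of_mul_eq_mul_left hp.pos (by linarith [h1] : p * (p - 1).choose (k - 1) = p * (m * k))
    exact this
  -- key mod p fact
  have hz : (((-1 : ℤ)) ^ k * (m : ℤ) + (k : ℤ) ^ (p - 2)) % p = 0 := by
    have hcast : (((-1 : ℤ) ^ k * (m : ℤ) + (k : ℤ) ^ (p - 2) : ℤ) : ZMod p) = 0 := by
      push_cast
      have hku : (k : ZMod p) ≠ 0 := by
        rw [Ne, ZMod.natCast_eq_zero_iff]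
        exact fun h => absurd (Nat.le_of_dvd (by omega) h) (by omega)
      have hmul : ((-1 : ZMod p) ^ k * (m : ℕ) + (k : ℕ) ^ (p - 2)) * (k : ℕ) = 0 := by
        have e1 : ((m : ZMod p)) * (k : ℕ) = (-1) ^ (k - 1) := by
          rw [← Nat.cast_mul, ← hmk, choose_sub_one_zmod p hp (k - 1) (by omega)]
        have e2 : ((k : ZMod p)) ^ (p - 2) * (k : ℕ) = 1 := by
          rw [← pow_succ]
          have : p - 2 + 1 = p - 1 := by omega
          rw [this]
          exact ZMod.pow_card_sub_one_eq_one hku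
        have e3 : ((-1 : ZMod p)) ^ k * (-1) ^ (k - 1) = -1 := by
          rw [← pow_add]
          have : k + (k - 1) = 2 * (k - 1) + 1 := by omega
          rw [this, pow_succ, pow_mul]
          simp
        calc ((-1 : ZMod p) ^ k * (m : ℕ) + (k : ℕ) ^ (p - 2)) * (k : ℕ)
            = (-1) ^ k * ((m : ZMod p) * (k : ℕ)) + ((k : ZMod p)) ^ (p - 2) * (k : ℕ) := by ring
          _ = (-1) ^ k * (-1) ^ (k - 1) + 1 := by rw [e1, e2]
          _ = 0 := by rw [e3]; ring
      rcases mul_eq_zero.mp hmul with h | h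
      · exact h
      · exact absurd h hku
    rwa [ZMod.intCast_zmod_eq_zero_iff_dvd, Int.dvd_iff_emod_eq_zero] at hcast
  have hdvd : (p : ℤ) ∣ (-1 : ℤ) ^ k * (m : ℤ) + (k : ℤ) ^ (p - 2) :=
    Int.dvd_of_emod_eq_zero hz
  obtain ⟨c, hc⟩ := hdvd
  refine ⟨c, ?_⟩
  have : (Nat.choose p k : ℤ) = (p : ℤ) * (m : ℤ) := by exact_mod_cast hm
  rw [this]
  linear_combination (p : ℤ) * hc

private lemma key_identity (p : ℕ) (hp : p.Prime) (hp3 : 3 < p) (s : ℤ) :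
    (p : ℤ) ^ 2 ∣ 1 - s ^ p - (1 - s) ^ p
      - (p : ℤ) * ∑ i ∈ Finset.Icc 1 (p - 1), (i : ℤ) ^ (p - 2) * s ^ i := by
  have hodd : Odd p := hp.odd_of_ne_two (by omega)
  have hp1 : 1 ≤ p := hp.pos
  have hexp : (1 - s) ^ p
      = 1 + (-s) ^ p + ∑ k ∈ Finset.Icc 1 (p - 1), (-s) ^ k * (Nat.choose p k : ℤ) := by
    have h1 : (1 - s) = (-s) + 1 := by ring
    rw [h1, add_pow]
    simp only [one_pow, mul_one]
    rw [Finset.sum_range_succ, Nat.choose_self]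
    have hrange : ∑ k ∈ range p, (-s) ^ k * (Nat.choose p k : ℤ)
        = 1 + ∑ k ∈ Finset.Icc 1 (p - 1), (-s) ^ k * (Nat.choose p k : ℤ) := by
      have hIcc : Finset.Ico 1 p = Finset.Icc 1 (p - 1) := by
        rw [← Finset.Ico_add_one_right_eq_Icc]
        congr 1
        omega
      rw [Finset.range_eq_Ico, Finset.sum_eq_sum_Ico_succ_bot (by omega : 0 < p), hIcc]
      simp
    rw [hrange]
    push_cast
    ring
  have hneg : (-s) ^ p = -s ^ p := hodd.neg_pow s
  have hmain : 1 - s ^ p - (1 - s) ^ p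
      - (p : ℤ) * ∑ i ∈ Finset.Icc 1 (p - 1), (i : ℤ) ^ (p - 2) * s ^ i
      = ∑ k ∈ Finset.Icc 1 (p - 1),
          (-((-1) ^ k * (Nat.choose p k : ℤ) + (p : ℤ) * (k : ℤ) ^ (p - 2)) * s ^ k) := by
    have hterm : ∀ k ∈ Finset.Icc 1 (p - 1),
        (-((-1) ^ k * (Nat.choose p k : ℤ) + (p : ℤ) * (k : ℤ) ^ (p - 2)) * s ^ k)
        = -((-s) ^ k * (Nat.choose p k : ℤ)) - (p : ℤ) * ((k : ℤ) ^ (p - 2) * s ^ k) := by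
      intro k _
      rw [neg_pow]
      ring
    rw [Finset.sum_congr rfl hterm, Finset.sum_sub_distrib, Finset.sum_neg_distrib,
      ← Finset.mul_sum, hexp, hneg]
    ring
  rw [hmain]
  apply Finset.dvd_sum
  intro k hk
  rw [Finset.mem_Icc] at hk
  have := term_dvd p hp k hk.1 hk.2
  exact dvd_mul_of_dvd_left (dvd_neg.mpr this) _

theorem stmt18 (p : ℕ) (hp : p.Prime) (hp3 : 3 < p) (t : ℤ)
    (ht : ¬ (p : ℤ) ∣ t * (t - 1) * (t + 1))
    (h1 : (p : ℤ) ∣ ∑ i ∈ Finset.Icc 1 (p - 1), (i : ℤ) ^ (p - 2) * t ^ i)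
    (h2 : (p : ℤ) ∣ ∑ i ∈ Finset.Icc 1 (p - 1), (i : ℤ) ^ (p - 2) * (t ^ 2) ^ i) :
    (p : ℤ) ^ 2 ∣ 1 + t ^ p - (1 + t) ^ p ∧
    (p : ℤ) ∣ ∑ i ∈ Finset.Icc 1 (p - 1), (i : ℤ) ^ (p - 2) * (-t) ^ i := by
  haveI : Fact p.Prime := ⟨hp⟩
  have hodd : Odd p := hp.odd_of_ne_two (by omega)
  have hpz : (p : ℤ) ≠ 0 := by exact_mod_cast hp.pos.ne'
  have hpprime : Prime (p : ℤ) := Nat.prime_iff_prime_int.mp hp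
  -- E1 : p^2 ∣ 1 - t^p - (1-t)^p
  have E1 : (p : ℤ) ^ 2 ∣ 1 - t ^ p - (1 - t) ^ p := by
    have hA := key_identity p hp hp3 t
    have : (p : ℤ) ^ 2 ∣ (p : ℤ) * ∑ i ∈ Finset.Icc 1 (p - 1), (i : ℤ) ^ (p - 2) * t ^ i := by
      rw [sq]; exact mul_dvd_mul_left _ h1
    have := dvd_add hA this
    simpa using this
  -- E2 : p^2 ∣ 1 - (t^2)^p - (1-t^2)^p
  have E2 : (p : ℤ) ^ 2 ∣ 1 - (t ^ 2) ^ p - (1 - t ^ 2) ^ p := by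
    have hA := key_identity p hp hp3 (t ^ 2)
    have : (p : ℤ) ^ 2 ∣ (p : ℤ) * ∑ i ∈ Finset.Icc 1 (p - 1), (i : ℤ) ^ (p - 2) * (t ^ 2) ^ i := by
      rw [sq]; exact mul_dvd_mul_left _ h2
    have := dvd_add hA this
    simpa using this
  -- rewrite E2
  have hfac : (1 - t ^ 2) ^ p = (1 - t) ^ p * (1 + t) ^ p := by
    rw [← mul_pow]; ring_nf
  have hsq : (t ^ 2) ^ p = (t ^ p) ^ 2 := by
    rw [← pow_mul, ← pow_mul, mul_comm]
  -- p^2 ∣ (1 - t^p) * (1 + t^p - (1+t)^p)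
  have E3 : (p : ℤ) ^ 2 ∣ (1 - t ^ p) * (1 + t ^ p - (1 + t) ^ p) := by
    have key : (1 - t ^ p) * (1 + t ^ p - (1 + t) ^ p)
        = (1 - (t ^ 2) ^ p - (1 - t ^ 2) ^ p)
          - (1 - t ^ p - (1 - t) ^ p) * (1 + t) ^ p := by
      rw [hfac, hsq]; ring
    rw [key]
    exact dvd_sub E2 (E1.mul_right _)
  -- coprimality of p and 1 - t^p
  have hcop : ¬ (p : ℤ) ∣ (1 - t ^ p) := by
    intro hdvd
    have hz : ((1 - t ^ p : ℤ) : ZMod p) = 0 := by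
      exact_mod_cast (ZMod.intCast_zmod_eq_zero_iff_dvd _ _).mpr hdvd
    push_cast at hz
    rw [ZMod.pow_card] at hz
    have : ((t - 1 : ℤ) : ZMod p) = 0 := by push_cast; linear_combination -hz
    have hd : (p : ℤ) ∣ t - 1 := (ZMod.intCast_zmod_eq_zero_iff_dvd _ _).mp this
    exact ht (Dvd.dvd.mul_right (Dvd.dvd.mul_left hd t) (t + 1))
  have hcop2 : IsCoprime ((p : ℤ) ^ 2) (1 - t ^ p) :=
    (hpprime.irreducible.coprime_iff_not_dvd.mpr hcop).pow_left
  have main1 : (p : ℤ) ^ 2 ∣ 1 + t ^ p - (1 + t) ^ p :=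
    hcop2.dvd_of_dvd_mul_left E3
  refine ⟨main1, ?_⟩
  -- second part
  have hA := key_identity p hp hp3 (-t)
  have hneg : (-t) ^ p = -t ^ p := hodd.neg_pow t
  rw [hneg] at hA
  have hsimp : 1 - -t ^ p - (1 - -t) ^ p = 1 + t ^ p - (1 + t) ^ p := by ring_nf
  rw [hsimp] at hA
  have : (p : ℤ) ^ 2 ∣ (p : ℤ) * ∑ i ∈ Finset.Icc 1 (p - 1), (i : ℤ) ^ (p - 2) * (-t) ^ i := by
    have := dvd_sub main1 hA
    simpa using this
  rw [sq] at this
  exact (mul_dvd_mul_iff_left hpz).mp this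
end
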